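/- Let b'_f(h,s) be the monic generator of the ideal of polynomials b(s) with b(s) δ_h f^s ∈ 𝒟[s](𝒥_{h,f}, f) δ_h f^s, and b_f(δ_h,s) the Bernstein polynomial of f associated with the section δ_h. Then b'_f(h,s) divides b_f(δ_h,s), and b_f(δ_h,s) divides (s+1)·b'_f(h,s). Consequently b'_f(h,s) equals either b_f(δ_h,s) or b_f(δ_h,s)/(s+1). -/

import Mathlib

open Polynomial

noncomputable section

set_option maxHeartbeats 1000000
set_option synthInstance.maxHeartbeats 400000

/-- The ring `𝒪` of germs (polynomial model `ℂ[x₁,…,xₙ]`). -/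
abbrev OO (n : ℕ) := MvPolynomial (Fin n) ℂ
/-- The fraction field of `𝒪`. -/
abbrev KK (n : ℕ) := FractionRing (OO n)

variable {n : ℕ}

/-- Inclusion `𝒪 → K`. -/
def toK {n : ℕ} (r : OO n) : KK n := algebraMap _ _ r

/-- A family of derivations of `K` extending the partial derivatives `∂/∂xᵢ` of `𝒪`. -/
def ExtendsPderiv (d : Fin n → Derivation ℂ (KK n) (KK n)) : Prop :=
  ∀ (i : Fin n) (r : OO n), d i (toK r) = toK (MvPolynomial.pderiv i r)

/-- Coefficientwise action of a derivation of `K` on `K[s]`. -/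
def coeffDer (d : Derivation ℂ (KK n) (KK n)) :
    Derivation ℂ (Polynomial (KK n)) (Polynomial (KK n)) :=
  PolynomialModule.equivPolynomialSelf.compDer d.mapCoeffs

/-- Multiplication operator on `K[s]`. -/
def mulOp (a : Polynomial (KK n)) : Module.End ℂ (Polynomial (KK n)) :=
  LinearMap.mulLeft ℂ a

/-- Twisted partial-derivative operator on `K[s]·f^s`:
`∂ᵢ(g(s) f^s) = ((∂ᵢ g)(s) + s·g(s)·(∂ᵢf/f))·f^s`. -/
def Dop (d : Derivation ℂ (KK n) (KK n)) (f : OO n) : Module.End ℂ (Polynomial (KK n)) :=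
  (coeffDer d).toLinearMap + mulOp (Polynomial.X * Polynomial.C (d (toK f) / toK f))

/-- The image of `𝒟[s]` in `End(K[s]·f^s)`: the ℂ-algebra generated by multiplications by
elements of `𝒪`, multiplication by `s`, and the twisted partials `∂ᵢ`. -/
def WeylS (d : Fin n → Derivation ℂ (KK n) (KK n)) (f : OO n) :
    Subalgebra ℂ (Module.End ℂ (Polynomial (KK n))) :=
  Algebra.adjoin ℂ
    ((Set.range fun r : OO n => mulOp (Polynomial.C (toK r))) ∪ {mulOp Polynomial.X} ∪
      Set.range fun i => Dop (d i) f)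

/-- The `𝒟[s]`-orbit span `𝒟[s]·T` of a set `T ⊆ K[s]·f^s`. -/
def DSpan (d : Fin n → Derivation ℂ (KK n) (KK n)) (f : OO n)
    (T : Set (Polynomial (KK n))) : Submodule ℂ (Polynomial (KK n)) :=
  Submodule.span ℂ {y | ∃ P ∈ WeylS d f, ∃ t ∈ T, y = P t}

/-- The image of `𝒟` in `End(K)` (untwisted action). -/
def Weyl0 (d : Fin n → Derivation ℂ (KK n) (KK n)) : Subalgebra ℂ (Module.End ℂ (KK n)) :=
  Algebra.adjoin ℂ
    ((Set.range fun r : OO n => LinearMap.mulLeft ℂ (toK r)) ∪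
      Set.range fun i => (d i).toLinearMap)

/-- The `𝒟`-orbit span `𝒟·T` of a set `T ⊆ K`. -/
def DSpan0 (d : Fin n → Derivation ℂ (KK n) (KK n)) (T : Set (KK n)) : Submodule ℂ (KK n) :=
  Submodule.span ℂ {y | ∃ P ∈ Weyl0 d, ∃ t ∈ T, y = P t}

/-- The ℂ-submodule `Σ_{g ∈ G} 𝒪[1/g]` of `K`. -/
def locSub (G : Set (OO n)) : Submodule ℂ (KK n) :=
  Submodule.span ℂ {x | ∃ r : OO n, ∃ g ∈ G, ∃ k : ℕ, x = toK r * (toK g)⁻¹ ^ k}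

/-- Polynomials in `s` all of whose coefficients lie in `V`. -/
def polySub (V : Submodule ℂ (KK n)) : Submodule ℂ (Polynomial (KK n)) where
  carrier := {g | ∀ m, g.coeff m ∈ V}
  add_mem' := fun ha hb m => by simpa using V.add_mem (ha m) (hb m)
  zero_mem' := fun m => by rw [Polynomial.coeff_zero]; exact V.zero_mem
  smul_mem' := fun c g hg m => by
    simpa [Polynomial.coeff_smul] using V.smul_mem c (hg m)

/-- Maximal `(p+1)×(p+1)` minor of the Jacobian matrix of `(h₁,…,h_p,f)`
on the columns `cols`. -/
def minorHF {p : ℕ} (h : Fin p → OO n) (f : OO n) (cols : Fin (p + 1) → Fin n) : OO n :=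
  Matrix.det (Matrix.of fun i j =>
    Fin.lastCases (MvPolynomial.pderiv (cols j) f)
      (fun i' => MvPolynomial.pderiv (cols j) (h i')) i)

/-- `p×p` minor of the Jacobian matrix of `h = (h₁,…,h_p)` on the columns `cols`. -/
def minorH {p : ℕ} (h : Fin p → OO n) (cols : Fin p → Fin n) : OO n :=
  Matrix.det (Matrix.of fun i j => MvPolynomial.pderiv (cols j) (h i))

/-- Image of `b(s) ∈ ℂ[s]` in `K[s]`. -/
def bK {n : ℕ} (b : Polynomial ℂ) : Polynomial (KK n) :=
  b.map ((algebraMap (OO n) (KK n)).comp MvPolynomial.C)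

/-!
Laplace expansion along the `f`-row turns the cofactors of the Jacobian matrix of `(h, f)` into
a vector field `Δ = Σⱼ cofⱼ ∂_{kⱼ}` with `Δ g = m(h, g)`. It kills every `hᵢ`, hence `δ_h`, and
sends `f` to the minor `m = m(h, f)`, so in the twisted action on `K[s] f^s` it gives
`(s + 1) m δ_h f^s = Δ (δ_h f^{s+1})`; trivially also `(s + 1) f δ_h f^s = (s + 1) δ_h f^{s+1}`.
As `s + 1` is central in `𝒟[s]`, multiplying a relation `b'(s) δ_h f^s ∈ 𝒟[s](𝒥, f) δ_h f^s` by
`s + 1` yields a functional equation for `(s + 1) b'(s)`. Conversely a functional equation for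
`b_f` is a relation for `b'`, since `f δ_h f^s` is one of the generators.
-/

section Jacobian

variable {p : ℕ} (h : Fin p → OO n) (cols : Fin (p + 1) → Fin n)

/-- Signed cofactor of the entry `∂_{cols j} f` of the matrix in `minorHF`. -/
def jacobianCofactor (j : Fin (p + 1)) : OO n :=
  (-1) ^ (p + (j : ℕ)) * minorH h (cols ∘ j.succAbove)

lemma minorHF_eq_sum_cofactor (g : OO n) :
    minorHF h g cols = ∑ j, jacobianCofactor h cols j * MvPolynomial.pderiv (cols j) g := by
  rw [minorHF, Matrix.det_succ_row _ (Fin.last p)]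
  refine Finset.sum_congr rfl fun j _ => ?_
  simp [jacobianCofactor, minorH, Matrix.submatrix, Fin.succAbove_last, Fin.val_last]
  ring

lemma minorHF_self (i : Fin p) : minorHF h (h i) cols = 0 :=
  Matrix.det_zero_of_row_eq (Fin.castSucc_lt_last i).ne (by ext j; simp)

end Jacobian

lemma Derivation.finset_sum_smul_apply {R A ι : Type*} [CommSemiring R] [CommSemiring A]
    [Algebra R A] (s : Finset ι) (c : ι → A) (D : ι → Derivation R A A) (x : A) :
    (∑ j ∈ s, c j • D j) x = ∑ j ∈ s, c j * D j x := by
  rw [← Derivation.coeFnAddMonoidHom_apply, map_sum, Finset.sum_apply]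
  rfl

section Operators

variable {f : OO n}

lemma coeffDer_coeff (D : Derivation ℂ (KK n) (KK n)) (g : (KK n)[X]) (m : ℕ) :
    (coeffDer D g).coeff m = D (g.coeff m) := rfl

lemma coeffDer_C (D : Derivation ℂ (KK n) (KK n)) (a : KK n) : coeffDer D (C a) = C (D a) := by
  ext m
  rw [coeffDer_coeff]
  rcases eq_or_ne m 0 with rfl | hm <;> simp [coeff_C, *]

lemma coeffDer_X (D : Derivation ℂ (KK n) (KK n)) : coeffDer D (X : (KK n)[X]) = 0 := by
  ext m
  rw [coeffDer_coeff]
  rcases eq_or_ne m 1 with rfl | hm <;> simp [coeff_X, *, Ne.symm]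

lemma mulOp_apply (a q : (KK n)[X]) : mulOp a q = a * q := rfl

lemma Dop_apply (D : Derivation ℂ (KK n) (KK n)) (g : (KK n)[X]) :
    Dop D f g = coeffDer D g + X * C (D (toK f) / toK f) * g := rfl

lemma Dop_X_mul (D : Derivation ℂ (KK n) (KK n)) (q : (KK n)[X]) :
    Dop D f (X * q) = X * Dop D f q := by
  rw [Dop_apply, Dop_apply, Derivation.leibniz, coeffDer_X, smul_eq_mul, smul_eq_mul]
  ring

/-- With `C (f a)` standing for `a f^{s+1}`: `D (a f^{s+1}) = ((s + 1) a D f + f D a) f^s`. -/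
lemma Dop_C_toK_mul (D : Derivation ℂ (KK n) (KK n)) (a : KK n) :
    Dop D f (C (toK f * a)) = (X + 1) * C (D (toK f) * a) + C (toK f * D a) := by
  have hquot : D (toK f) / toK f * (toK f * a) = D (toK f) * a := by
    rcases eq_or_ne (toK f) 0 with hf | hf
    · simp [hf]
    · field_simp
  rw [Dop_apply, coeffDer_C, mul_assoc, ← C_mul, hquot, Derivation.leibniz, smul_eq_mul,
    smul_eq_mul, C_add, C_mul, C_mul, C_mul]
  ring

lemma Dop_sum_smul {ι : Type*} (s : Finset ι) (c : ι → KK n)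
    (δ : ι → Derivation ℂ (KK n) (KK n)) :
    Dop (∑ j ∈ s, c j • δ j) f = ∑ j ∈ s, mulOp (C (c j)) * Dop (δ j) f := by
  ext1 q
  have hcoeff : coeffDer (∑ j ∈ s, c j • δ j) q = ∑ j ∈ s, C (c j) * coeffDer (δ j) q := by
    ext m
    simp [coeffDer_coeff, Derivation.finset_sum_smul_apply]
  simp only [Dop_apply, hcoeff, Derivation.finset_sum_smul_apply, Finset.sum_div, map_sum,
    Finset.mul_sum, X_mul_C, Finset.sum_mul, LinearMap.sum_apply, Module.End.mul_apply,
    mulOp_apply, mul_add, Finset.sum_add_distrib, add_right_inj]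
  refine Finset.sum_congr rfl fun j _ => ?_
  rw [mul_div_assoc, C_mul]
  ring

end Operators

section WeylS

variable {d : Fin n → Derivation ℂ (KK n) (KK n)} {f : OO n}

lemma mulOp_C_toK_mem_weylS (r : OO n) : mulOp (C (toK r)) ∈ WeylS d f :=
  Algebra.subset_adjoin (Or.inl (Or.inl ⟨r, rfl⟩))

lemma mulOp_X_mem_weylS : mulOp (X : (KK n)[X]) ∈ WeylS d f :=
  Algebra.subset_adjoin (Or.inl (Or.inr rfl))

lemma Dop_mem_weylS (i : Fin n) : Dop (d i) f ∈ WeylS d f :=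
  Algebra.subset_adjoin (Or.inr ⟨i, rfl⟩)

lemma Dop_sum_smul_mem_weylS {ι : Type*} (s : Finset ι) (c : ι → OO n) (σ : ι → Fin n) :
    Dop (∑ j ∈ s, toK (c j) • d (σ j)) f ∈ WeylS d f := by
  rw [Dop_sum_smul]
  exact sum_mem fun j _ => mul_mem (mulOp_C_toK_mem_weylS _) (Dop_mem_weylS _)

lemma mulOp_X_add_one : mulOp (X + 1 : (KK n)[X]) = mulOp X + 1 :=
  LinearMap.ext fun q => add_one_mul X q

lemma mulOp_X_add_one_mem_weylS : mulOp (X + 1 : (KK n)[X]) ∈ WeylS d f := by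
  rw [mulOp_X_add_one]
  exact add_mem mulOp_X_mem_weylS (one_mem _)

lemma commute_mulOp_X_of_mem_weylS {P : Module.End ℂ (KK n)[X]} (hP : P ∈ WeylS d f) :
    Commute (mulOp X) P := by
  suffices WeylS d f ≤ Subalgebra.centralizer ℂ {mulOp (X : (KK n)[X])} from
    (Subalgebra.mem_centralizer_iff ℂ).1 (this hP) _ rfl
  refine Algebra.adjoin_le ?_
  rintro Q ((⟨r, rfl⟩ | rfl) | ⟨i, rfl⟩) _ rfl
  · exact LinearMap.ext fun q => (mul_left_comm _ _ _).symm
  · rfl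
  · exact LinearMap.ext fun q => (Dop_X_mul _ q).symm

lemma commute_mulOp_X_add_one_of_mem_weylS {P : Module.End ℂ (KK n)[X]} (hP : P ∈ WeylS d f) :
    Commute (mulOp (X + 1)) P := by
  rw [mulOp_X_add_one]
  exact (commute_mulOp_X_of_mem_weylS hP).add_left (Commute.one_left P)

variable (d f) in
def weylOrbit (x₀ : (KK n)[X]) : Submodule ℂ (KK n)[X] :=
  (Subalgebra.toSubmodule (WeylS d f)).map (LinearMap.applyₗ x₀)

lemma mem_weylOrbit {x₀ y : (KK n)[X]} : y ∈ weylOrbit d f x₀ ↔ ∃ Q ∈ WeylS d f, Q x₀ = y :=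
  Iff.rfl

lemma X_add_one_mul_mem_weylOrbit {T : Set (KK n)[X]} {x₀ u : (KK n)[X]}
    (hT : ∀ t ∈ T, (X + 1) * t ∈ weylOrbit d f x₀) (hu : u ∈ DSpan d f T) :
    (X + 1) * u ∈ weylOrbit d f x₀ := by
  suffices DSpan d f T ≤ (weylOrbit d f x₀).comap (mulOp (X + 1)) from this hu
  refine Submodule.span_le.2 ?_
  rintro _ ⟨P, hP, t, ht, rfl⟩
  obtain ⟨Q, hQ, hQt⟩ := mem_weylOrbit.1 (hT t ht)
  refine mem_weylOrbit.2 ⟨P * Q, mul_mem hP hQ, ?_⟩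
  rw [Module.End.mul_apply, hQt]
  exact LinearMap.congr_fun (commute_mulOp_X_add_one_of_mem_weylS hP).eq.symm t

end WeylS

lemma X_mul_mem_polySub {V : Submodule ℂ (KK n)} {v : (KK n)[X]} (hv : v ∈ polySub V) :
    X * v ∈ polySub V
  | 0 => by simp [V.zero_mem]
  | m + 1 => by simpa [coeff_X_mul] using hv m

lemma bK_X_add_one_mul (b : ℂ[X]) : (bK ((X + 1) * b) : (KK n)[X]) = (X + 1) * bK b := by
  simp [bK]

section JacobianField

variable (d : Fin n → Derivation ℂ (KK n) (KK n)) {p : ℕ} (h : Fin p → OO n)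
  (cols : Fin (p + 1) → Fin n)

/-- The vector field `Δ^h_{k₁,…,k_{p+1}}` of the paper, for `kⱼ = cols j`. -/
def jacobianField : Derivation ℂ (KK n) (KK n) :=
  ∑ j, toK (jacobianCofactor h cols j) • d (cols j)

variable {d}

lemma jacobianField_toK (hd : ExtendsPderiv d) (r : OO n) :
    jacobianField d h cols (toK r) = toK (minorHF h r cols) := by
  rw [jacobianField, Derivation.finset_sum_smul_apply, minorHF_eq_sum_cofactor]
  simp only [hd _ r]
  simp [toK]

lemma jacobianField_inv_prod (hd : ExtendsPderiv d) :
    jacobianField d h cols (toK (∏ i, h i))⁻¹ = 0 := by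
  have hprod : jacobianField d h cols (toK (∏ i, h i)) = 0 := by
    rw [toK, map_prod]
    refine Finset.prod_induction _ (fun x => jacobianField d h cols x = 0) ?_ ?_ ?_
    · intro a b ha hb
      simp [Derivation.leibniz, ha, hb]
    · exact Derivation.map_one_eq_zero _
    · intro i _
      rw [← toK, jacobianField_toK h cols hd, minorHF_self]
      simp [toK]
  rw [Derivation.leibniz_inv, hprod, smul_zero]

lemma Dop_jacobianField_C (hd : ExtendsPderiv d) (f : OO n) :
    Dop (jacobianField d h cols) f (C (toK f * (toK (∏ i, h i))⁻¹)) =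
      (X + 1) * C (toK (minorHF h f cols) * (toK (∏ i, h i))⁻¹) := by
  rw [Dop_C_toK_mul, jacobianField_inv_prod h cols hd, jacobianField_toK h cols hd, mul_zero,
    C_0, add_zero]

lemma Dop_jacobianField_mem_weylS (f : OO n) : Dop (jacobianField d h cols) f ∈ WeylS d f :=
  Dop_sum_smul_mem_weylS _ _ _

end JacobianField

variable (p : ℕ)

theorem bprime_divides_bernstein_general (n p : ℕ)
    (d : Fin n → Derivation ℂ (KK n) (KK n)) (hd : ExtendsPderiv d)
    (h : Fin p → OO n) (f : OO n)
    -- `δ_h f^s`, represented by the constant polynomial `1/(h₁⋯h_p)` in `K[s]`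
    (delta : KK n) (hdelta : delta = (toK (∏ i, h i))⁻¹)
    -- the ℂ-submodule of `K` corresponding to `Σᵢ 𝒪[1/(f·h₁⋯ȟᵢ⋯h_p)]`, so that the
    -- ambient `𝒟[s]`-module `ℛ_h[1/f][s]·f^s` is `K[s]` modulo `polySub V`
    (V : Submodule ℂ (KK n))
    -- membership predicate for the ideal of `b(s)` with
    -- `b(s) δ_h f^s ∈ 𝒟[s](𝒥_{h,f}, f) δ_h f^s`
    (memB' : Polynomial ℂ → Prop)
    (hmemB' : ∀ b : Polynomial ℂ, memB' b ↔
      bK b * Polynomial.C delta ∈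
        DSpan d f ({y | ∃ cols : Fin (p + 1) → Fin n, StrictMono cols ∧
            y = Polynomial.C (toK (minorHF h f cols) * delta)} ∪
          {Polynomial.C (toK f * delta)}) ⊔ polySub V)
    -- membership predicate for the ideal of `b(s)` with
    -- `b(s) δ_h f^s = P(s)·δ_h f^(s+1)` for some `P(s) ∈ 𝒟[s]`
    (memBf : Polynomial ℂ → Prop)
    (hmemBf : ∀ b : Polynomial ℂ, memBf b ↔
      ∃ P ∈ WeylS d f,
        bK b * Polynomial.C delta - P (Polynomial.C (toK f * delta)) ∈ polySub V)
    -- `b'` is the monic generator `b'_f(h,s)`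
    (b' : Polynomial ℂ) (hb'2 : memB' b')
    (hb'3 : ∀ c : Polynomial ℂ, memB' c → b' ∣ c)
    -- `bf` is the Bernstein polynomial `b_f(δ_h,s)`
    (bf : Polynomial ℂ) (hbf2 : memBf bf)
    (hbf3 : ∀ c : Polynomial ℂ, memBf c → bf ∣ c) :
    b' ∣ bf ∧ bf ∣ (Polynomial.X + 1) * b' := by
  subst hdelta
  constructor
  · refine hb'3 bf ((hmemB' bf).2 ?_)
    obtain ⟨P, hP, hv⟩ := (hmemBf bf).1 hbf2
    exact Submodule.mem_sup.2 ⟨_, Submodule.subset_span ⟨P, hP, _, Or.inr rfl, rfl⟩, _, hv,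
      add_sub_cancel _ _⟩
  · refine hbf3 _ ((hmemBf _).2 ?_)
    obtain ⟨u, hu, v, hv, huv⟩ := Submodule.mem_sup.1 ((hmemB' b').1 hb'2)
    have hXu : (X + 1) * u ∈ weylOrbit d f (C (toK f * (toK (∏ i, h i))⁻¹)) := by
      refine X_add_one_mul_mem_weylOrbit ?_ hu
      rintro t (⟨cols, -, rfl⟩ | rfl)
      · exact mem_weylOrbit.2
          ⟨_, Dop_jacobianField_mem_weylS h cols f, Dop_jacobianField_C h cols hd f⟩
      · exact mem_weylOrbit.2 ⟨_, mulOp_X_add_one_mem_weylS, rfl⟩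
    obtain ⟨Q, hQ, hQu⟩ := mem_weylOrbit.1 hXu
    refine ⟨Q, hQ, ?_⟩
    rw [bK_X_add_one_mul, mul_assoc, ← huv, hQu, mul_add, add_sub_cancel_left, add_mul, one_mul]
    exact add_mem (X_mul_mem_polySub hv) hv

/-- `b'_f(h,s)` divides `b_f(δ_h,s)`, and `b_f(δ_h,s)` divides `(s+1)·b'_f(h,s)`; consequently `b'_f(h,s)` equals either `b_f(δ_h,s)` or `b_f(δ_h,s)/(s+1)`. -/
theorem bprime_divides_bernstein (n p : ℕ)
    (d : Fin n → Derivation ℂ (KK n) (KK n)) (hd : ExtendsPderiv d)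
    (h : Fin p → OO n) (f : OO n)
    (hh : ∀ i, h i ≠ 0) (hf : f ≠ 0)
    -- `δ_h f^s`, represented by the constant polynomial `1/(h₁⋯h_p)` in `K[s]`
    (delta : KK n) (hdelta : delta = (toK (∏ i, h i))⁻¹)
    -- the ℂ-submodule of `K` corresponding to `Σᵢ 𝒪[1/(f·h₁⋯ȟᵢ⋯h_p)]`, so that the
    -- ambient `𝒟[s]`-module `ℛ_h[1/f][s]·f^s` is `K[s]` modulo `polySub V`
    (V : Submodule ℂ (KK n))
    (hV : V = locSub {x | ∃ i : Fin p, x = f * ∏ j ∈ Finset.univ.erase i, h j})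
    -- membership predicate for the ideal of `b(s)` with
    -- `b(s) δ_h f^s ∈ 𝒟[s](𝒥_{h,f}, f) δ_h f^s`
    (memB' : Polynomial ℂ → Prop)
    (hmemB' : ∀ b : Polynomial ℂ, memB' b ↔
      bK b * Polynomial.C delta ∈
        DSpan d f ({y | ∃ cols : Fin (p + 1) → Fin n, StrictMono cols ∧
            y = Polynomial.C (toK (minorHF h f cols) * delta)} ∪
          {Polynomial.C (toK f * delta)}) ⊔ polySub V)
    -- membership predicate for the ideal of `b(s)` with
    -- `b(s) δ_h f^s = P(s)·δ_h f^(s+1)` for some `P(s) ∈ 𝒟[s]`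
    (memBf : Polynomial ℂ → Prop)
    (hmemBf : ∀ b : Polynomial ℂ, memBf b ↔
      ∃ P ∈ WeylS d f,
        bK b * Polynomial.C delta - P (Polynomial.C (toK f * delta)) ∈ polySub V)
    -- `b'` is the monic generator `b'_f(h,s)`
    (b' : Polynomial ℂ) (hb'1 : b'.Monic) (hb'2 : memB' b')
    (hb'3 : ∀ c : Polynomial ℂ, memB' c → b' ∣ c)
    -- `bf` is the Bernstein polynomial `b_f(δ_h,s)`
    (bf : Polynomial ℂ) (hbf1 : bf.Monic) (hbf2 : memBf bf)
    (hbf3 : ∀ c : Polynomial ℂ, memBf c → bf ∣ c) :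
    b' ∣ bf ∧ bf ∣ (Polynomial.X + 1) * b' :=
  bprime_divides_bernstein_general n p d hd h f delta hdelta V memB' hmemB' memBf hmemBf b' hb'2
    hb'3 bf hbf2 hbf3
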